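/- arXiv:1412.8628 — 3 statements merged into one kernel-verified Lean document; each statement's English description precedes it below -/
import Mathlib

section
/- Under Assumptions 1–3, let α* ∈ I and T > 0. Let, for some s ≥ 0 and τ ∈ [s, s+T), continuous functions u_i : [τ, s+T) → B_{α*}, i = 1, 2, both satisfy the differential equation d/dt u(t) = Au(t) + Zu(t) on (τ, s+T) in B_{α*}. Suppose there exists α_τ ∈ (α̲, α*) such that τ + T(α_τ, α*) ≥ s + T and u_1(τ) = u_2(τ) =: u_τ ∈ B_{α_τ}. Then u_1(t) = u_2(t) in B_{α*} for all t ∈ (τ, s+T). In particular, the solution constructed in the existence theorem is unique. -/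
noncomputable section

open Set

/-- Convergence `f t → L` as `t → t₀` within the set `s`, with respect to the
norm-like functional `nrm`. -/
def STendsTo {V : Type} [AddCommGroup V] (nrm : V → ℝ) (f : ℝ → V) (s : Set ℝ)
    (t₀ : ℝ) (L : V) : Prop :=
  ∀ ε > 0, ∃ δ > 0, ∀ t ∈ s, t ≠ t₀ → |t - t₀| < δ → nrm (f t - L) < ε

/-- Continuity of `f` on the set `s`, with respect to the norm-like functional `nrm`. -/
def SContinuousOn {V : Type} [AddCommGroup V] (nrm : V → ℝ) (f : ℝ → V) (s : Set ℝ) : Prop :=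
  ∀ t₀ ∈ s, STendsTo nrm f s t₀ (f t₀)

/-- `f` has the derivative `L` at `t₀` within the set `s`, w.r.t. the norm-like
functional `nrm`. -/
def SHasDerivWithin {V : Type} [AddCommGroup V] [Module ℝ V] (nrm : V → ℝ)
    (f : ℝ → V) (s : Set ℝ) (t₀ : ℝ) (L : V) : Prop :=
  STendsTo nrm (fun t => (t - t₀)⁻¹ • (f t - f t₀)) s t₀ L

/-- The setting of Assumptions 1–3 of the paper: an increasing scale of Banach
spaces `B α`, `α ∈ I = (α̲, ᾱ)`, realized as submodules of an ambient vector space `V`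
with norms `nrm α`; an operator `A` generating `C₀`-semigroups `S α` on closed subspaces
`C α ⊆ B α` with domains `D α`; and an Ovsyannikov-type operator `Z` acting in the scale. -/
structure OvsSystem where
  /-- the ambient vector space containing all spaces of the scale -/
  V : Type
  [grp : AddCommGroup V]
  [mod : Module ℝ V]
  /-- the lower bound `α̲ > 0` of the index interval -/
  aLow : ℝ
  /-- the upper bound `ᾱ ∈ (α̲, ∞]` of the index interval -/
  aHigh : EReal
  aLow_pos : 0 < aLow
  aLow_lt_aHigh : (aLow : EReal) < aHigh
  /-- the index interval `I = (α̲, ᾱ)` -/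
  idx : Set ℝ
  idx_def : idx = {α : ℝ | aLow < α ∧ (α : EReal) < aHigh}
  -- Assumption 1: an increasing scale of Banach spaces
  /-- the spaces of the scale -/
  B : ℝ → Submodule ℝ V
  /-- the norms of the spaces of the scale -/
  nrm : ℝ → V → ℝ
  nrm_nonneg : ∀ α ∈ idx, ∀ u ∈ B α, 0 ≤ nrm α u
  nrm_eq_zero : ∀ α ∈ idx, ∀ u ∈ B α, nrm α u = 0 → u = 0
  nrm_zero : ∀ α ∈ idx, nrm α 0 = 0
  nrm_add : ∀ α ∈ idx, ∀ u ∈ B α, ∀ v ∈ B α, nrm α (u + v) ≤ nrm α u + nrm α v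
  nrm_smul : ∀ α ∈ idx, ∀ c : ℝ, ∀ u ∈ B α, nrm α (c • u) = |c| * nrm α u
  /-- each `(B α, nrm α)` is complete -/
  complete : ∀ α ∈ idx, ∀ u : ℕ → V, (∀ n, u n ∈ B α) →
    (∀ ε > 0, ∃ K : ℕ, ∀ m ≥ K, ∀ n ≥ K, nrm α (u m - u n) < ε) →
    ∃ v ∈ B α, ∀ ε > 0, ∃ K : ℕ, ∀ n ≥ K, nrm α (u n - v) < ε
  /-- the scale is increasing: `B α' ⊆ B α''` for `α' ≤ α''` -/
  B_mono : ∀ α' ∈ idx, ∀ α'' ∈ idx, α' ≤ α'' → B α' ≤ B α''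
  /-- the norms decrease along the scale: `‖u‖_{α''} ≤ ‖u‖_{α'}` for `α' ≤ α''` -/
  nrm_mono : ∀ α' ∈ idx, ∀ α'' ∈ idx, α' ≤ α'' → ∀ u ∈ B α', nrm α'' u ≤ nrm α' u
  -- Assumption 2: the operator `A` and the semigroups `S α`
  /-- the closed subspaces `C α ⊆ B α` -/
  C : ℝ → Submodule ℝ V
  /-- the domains `D α ⊆ C α` -/
  D : ℝ → Submodule ℝ V
  D_le_C : ∀ α ∈ idx, D α ≤ C α
  C_le_B : ∀ α ∈ idx, C α ≤ B α
  /-- `C α` is closed in `(B α, nrm α)` -/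
  C_closed : ∀ α ∈ idx, ∀ u : ℕ → V, (∀ n, u n ∈ C α) → ∀ v ∈ B α,
    (∀ ε > 0, ∃ K : ℕ, ∀ n ≥ K, nrm α (u n - v) < ε) → v ∈ C α
  /-- `D α` is dense in `(C α, nrm α)` -/
  D_dense : ∀ α ∈ idx, ∀ v ∈ C α, ∀ ε > 0, ∃ u ∈ D α, nrm α (v - u) < ε
  /-- the operator `A` (defined on the whole of `V`; the paper requires it on `B_I`) -/
  A : V →ₗ[ℝ] V
  /-- `A` maps `B_I = ⋃_{α ∈ I} B_α` into itself -/
  A_maps : ∀ α ∈ idx, ∀ u ∈ B α, ∃ β ∈ idx, A u ∈ B β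
  /-- the constant `ν ≥ 1` in the uniform exponential bound -/
  nu : ℝ
  /-- the constant `ω ∈ ℝ` in the uniform exponential bound -/
  om : ℝ
  one_le_nu : 1 ≤ nu
  /-- the semigroups: `S α t` is the semigroup on `C α` at time `t` -/
  S : ℝ → ℝ → V → V
  S_mem : ∀ α ∈ idx, ∀ t ≥ 0, ∀ u ∈ C α, S α t u ∈ C α
  S_id : ∀ α ∈ idx, ∀ u ∈ C α, S α 0 u = u
  S_semigroup : ∀ α ∈ idx, ∀ t ≥ 0, ∀ t' ≥ 0, ∀ u ∈ C α,
    S α t (S α t' u) = S α (t + t') u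
  S_add : ∀ α ∈ idx, ∀ t ≥ 0, ∀ u ∈ C α, ∀ v ∈ C α, S α t (u + v) = S α t u + S α t v
  S_smul : ∀ α ∈ idx, ∀ t ≥ 0, ∀ c : ℝ, ∀ u ∈ C α, S α t (c • u) = c • S α t u
  /-- the uniform exponential bound `‖S_α(t)‖ ≤ ν e^{ωt}` -/
  S_bound : ∀ α ∈ idx, ∀ t ≥ 0, ∀ u ∈ C α, nrm α (S α t u) ≤ nu * Real.exp (om * t) * nrm α u
  /-- strong continuity of `S α` on `C α` -/
  S_cont : ∀ α ∈ idx, ∀ u ∈ C α, ∀ t₀ ≥ 0, ∀ ε > 0, ∃ δ > 0, ∀ t ≥ 0,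
    |t - t₀| < δ → nrm α (S α t u - S α t₀ u) < ε
  /-- `(A, D α)` is the generator of `S α`: on `D α` the semigroup is differentiable
  at `t = 0` with derivative `A u` -/
  S_gen : ∀ α ∈ idx, ∀ u ∈ D α, ∀ ε > 0, ∃ δ > 0, ∀ t : ℝ, 0 < t → t < δ →
    nrm α (t⁻¹ • (S α t u - u) - A u) < ε
  /-- `D α` is the full generator domain -/
  S_gen_max : ∀ α ∈ idx, ∀ u ∈ C α, ∀ v ∈ C α,
    (∀ ε > 0, ∃ δ > 0, ∀ t : ℝ, 0 < t → t < δ → nrm α (t⁻¹ • (S α t u - u) - v) < ε) →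
    u ∈ D α
  /-- `B α' ⊆ D α` for `α' < α` -/
  B_le_D : ∀ α' ∈ idx, ∀ α ∈ idx, α' < α → B α' ≤ D α
  /-- `B α'` is `S α`-invariant for `α' < α` -/
  B_invariant : ∀ α' ∈ idx, ∀ α ∈ idx, α' < α → ∀ t ≥ 0, ∀ u ∈ B α', S α t u ∈ B α'
  /-- `S α` restricted to `B α'` coincides with `S α'`, for `α' < α` -/
  S_restrict : ∀ α' ∈ idx, ∀ α ∈ idx, α' < α → ∀ t ≥ 0, ∀ u ∈ B α', S α t u = S α' t u
  -- Assumption 3: the Ovsyannikov operator `Z`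
  /-- the increasing continuous function `M : I → (0, ∞)` -/
  M : ℝ → ℝ
  /-- the increasing continuous function `N : I → (0, ∞)` -/
  Nf : ℝ → ℝ
  M_pos : ∀ α ∈ idx, 0 < M α
  N_pos : ∀ α ∈ idx, 0 < Nf α
  M_mono : ∀ α' ∈ idx, ∀ α'' ∈ idx, α' ≤ α'' → M α' ≤ M α''
  N_mono : ∀ α' ∈ idx, ∀ α'' ∈ idx, α' ≤ α'' → Nf α' ≤ Nf α''
  M_cont : ContinuousOn M idx
  N_cont : ContinuousOn Nf idx
  /-- the operator `Z` (defined on the whole of `V`; the paper requires it on `B_I`) -/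
  Z : V →ₗ[ℝ] V
  /-- `Z` maps `B α'` into `B α''` for `α̲ < α' < α'' ≤ α*`, `α* ∈ I` -/
  Z_mem : ∀ αst ∈ idx, ∀ α' α'' : ℝ, aLow < α' → α' < α'' → α'' ≤ αst →
    ∀ u ∈ B α', Z u ∈ B α''
  /-- the Ovsyannikov bound `‖Zu‖_{α''} ≤ (M(α*)/(α''-α') + N(α*)) ‖u‖_{α'}` -/
  Z_bound : ∀ αst ∈ idx, ∀ α' α'' : ℝ, aLow < α' → α' < α'' → α'' ≤ αst →
    ∀ u ∈ B α', nrm α'' (Z u) ≤ (M αst / (α'' - α') + Nf αst) * nrm α' u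

attribute [instance] OvsSystem.grp OvsSystem.mod

namespace OvsSystem

/-- The time horizon `T(α, β) = (β − α)/(e ν M(β))`. -/
def Tt (P : OvsSystem) (α β : ℝ) : ℝ := (β - α) / (Real.exp 1 * P.nu * P.M β)

/-- `u` is a solution on `[s, s+T)` in `B α*` of `d/dt u = Au + Zu`, `u(s) = u_s`:
it takes values in `B α*`, is continuous on `[s, s+T)`, satisfies
`Au(t), Zu(t) ∈ B α*` and the differential equation on `(s, s+T)`, and `u(s) = u_s`. -/
def IsSol (P : OvsSystem) (αst s T : ℝ) (us : P.V) (u : ℝ → P.V) : Prop :=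
  (∀ t ∈ Set.Ico s (s + T), u t ∈ P.B αst) ∧
  SContinuousOn (P.nrm αst) u (Set.Ico s (s + T)) ∧
  (∀ t ∈ Set.Ioo s (s + T), P.A (u t) ∈ P.B αst ∧ P.Z (u t) ∈ P.B αst) ∧
  (∀ t ∈ Set.Ioo s (s + T),
    SHasDerivWithin (P.nrm αst) u (Set.Ico s (s + T)) t (P.A (u t) + P.Z (u t))) ∧
  u s = us

end OvsSystem

/-!
The difference `w = u₁ - u₂` solves the equation with `w(τ) = 0`. Since `I` is open there is room
above `α*`: fix `β ∈ (α*, ᾱ)`. For `α* < μ` the right slope of `r ↦ S_μ(c - r) w(r)` is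
`S_μ(c - r) Z w(r)`, which gives the Duhamel bound `‖w(c)‖_μ ≤ ν e^{|ω|R} ∫_τ^c ‖Z w(r)‖_μ dr`.
Iterating it over `n` equally spaced levels from `α*` to `β`, with the Ovsyannikov bound on `Z`,
gives `‖w(t)‖_β ≤ K (L_n (t - τ))^n / n!` with `L_n = O(n)`; by `n^n / n! ≤ e^n` this tends to
zero as long as `t - τ` stays below a fixed `Δ > 0`. Restarting at `τ + Δ, τ + 2Δ, …` covers the
whole interval.
-/

open Filter Topology Nat

theorem image_sub_le_of_slope_right_lt {f H H' : ℝ → ℝ} {a b : ℝ} (hab : a ≤ b)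
    (hf : ContinuousOn f (Icc a b)) (hH : ∀ x, HasDerivAt H (H' x) x)
    (hslope : ∀ x ∈ Ioo a b, ∀ r > H' x, ∀ᶠ z in 𝓝[>] x, slope f x z < r) :
    f b - f a ≤ H b - H a := by
  rcases hab.eq_or_lt with rfl | hab
  · simp
  have hB : ContinuousOn H (Icc a b) := fun x _ => (hH x).continuousAt.continuousWithinAt
  have hright : ∀ a' ∈ Ioo a b, f b ≤ f a' + (H b - H a') := fun a' ha' =>
    have hsub : Icc a' b ⊆ Icc a b := Icc_subset_Icc_left ha'.1.le
    image_le_of_liminf_slope_right_le_deriv_boundary (hf.mono hsub)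
      (B := fun x => f a' + (H x - H a')) (by simp)
      (continuousOn_const.add ((hB.mono hsub).sub continuousOn_const))
      (fun x _ => ((hH x).sub_const (H a')).const_add (f a') |>.hasDerivWithinAt)
      (fun x hx r hr => (hslope x ⟨ha'.1.trans_le hx.1, hx.2⟩ r hr).frequently)
      ⟨ha'.2.le, le_rfl⟩
  have hcl : a ∈ closure (Ioo a b) := by rw [closure_Ioo hab.ne]; exact ⟨le_rfl, hab.le⟩
  have hlim : f b ≤ f a + (H b - H a) := ContinuousWithinAt.closure_le hcl
    continuousWithinAt_const (((hf a ⟨le_rfl, hab.le⟩).add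
      (continuousWithinAt_const.sub (hB a ⟨le_rfl, hab.le⟩))).mono Ioo_subset_Icc_self) hright
  linarith

theorem pow_div_factorial_le_half_pow {x : ℝ} {n : ℕ} (hx₀ : 0 ≤ x)
    (hx : x ≤ n / (2 * Real.exp 1)) : x ^ n / n ! ≤ (1 / 2) ^ n := by
  have hn : (n : ℝ) ^ n / n ! ≤ Real.exp 1 ^ n := by
    simpa [← Real.exp_nat_mul] using Real.pow_div_factorial_le_exp _ (Nat.cast_nonneg n) n
  calc x ^ n / n ! ≤ (n / (2 * Real.exp 1)) ^ n / n ! := by gcongr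
    _ = (n : ℝ) ^ n / n ! / (2 * Real.exp 1) ^ n := by rw [div_pow]; ring
    _ ≤ Real.exp 1 ^ n / (2 * Real.exp 1) ^ n := by gcongr
    _ = (1 / 2) ^ n := by rw [mul_pow, div_pow, one_pow]; field_simp

theorem STendsTo.mono {V : Type} [AddCommGroup V] {nrm : V → ℝ} {f : ℝ → V} {s s' : Set ℝ}
    {t₀ : ℝ} {L : V} (h : STendsTo nrm f s t₀ L) (hs : s' ⊆ s) : STendsTo nrm f s' t₀ L :=
  fun ε hε => (h ε hε).imp fun _ ⟨hδ, hf⟩ => ⟨hδ, fun t ht => hf t (hs ht)⟩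

namespace OvsSystem

def semigroupBound (P : OvsSystem) (R : ℝ) : ℝ := P.nu * Real.exp (|P.om| * R)

variable {P : OvsSystem}

theorem ordConnected_idx : P.idx.OrdConnected := by
  rw [P.idx_def]
  exact ⟨fun x hx y hy z hz => ⟨hx.1.trans_le hz.1, (EReal.coe_le_coe_iff.2 hz.2).trans_lt hy.2⟩⟩

theorem aLow_lt {α : ℝ} (hα : α ∈ P.idx) : P.aLow < α := by
  rw [P.idx_def] at hα; exact hα.1

theorem exists_gt_mem_idx {α : ℝ} (hα : α ∈ P.idx) : ∃ β ∈ P.idx, α < β := by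
  rw [P.idx_def] at hα ⊢
  obtain ⟨β, hαβ, hβ⟩ := EReal.exists_between_coe_real hα.2
  exact ⟨β, ⟨hα.1.trans (EReal.coe_lt_coe_iff.1 hαβ), hβ⟩, EReal.coe_lt_coe_iff.1 hαβ⟩

section Norm

variable {α : ℝ} (hα : α ∈ P.idx) {u v : P.V}
include hα

theorem nrm_neg (hu : u ∈ P.B α) : P.nrm α (-u) = P.nrm α u := by
  simpa using P.nrm_smul α hα (-1) u hu

theorem nrm_sub_le (hu : u ∈ P.B α) (hv : v ∈ P.B α) :
    P.nrm α (u - v) ≤ P.nrm α u + P.nrm α v := by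
  simpa [sub_eq_add_neg, nrm_neg hα hv] using P.nrm_add α hα u hu (-v) (neg_mem hv)

theorem nrm_sub_comm (hu : u ∈ P.B α) (hv : v ∈ P.B α) :
    P.nrm α (u - v) = P.nrm α (v - u) := by
  rw [← neg_sub, nrm_neg hα (sub_mem hv hu)]

theorem abs_nrm_sub_nrm_le (hu : u ∈ P.B α) (hv : v ∈ P.B α) :
    |P.nrm α u - P.nrm α v| ≤ P.nrm α (u - v) := by
  have h₁ := P.nrm_add α hα (u - v) (sub_mem hu hv) v hv
  have h₂ := P.nrm_add α hα (v - u) (sub_mem hv hu) u hu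
  rw [sub_add_cancel] at h₁ h₂
  rw [nrm_sub_comm hα hv hu] at h₂
  exact abs_sub_le_iff.2 ⟨by linarith, by linarith⟩

end Norm

theorem _root_.STendsTo.sub {α : ℝ} (hα : α ∈ P.idx) {f g : ℝ → P.V} {s : Set ℝ} {t₀ : ℝ}
    {L L' : P.V}
    (hf : STendsTo (P.nrm α) f s t₀ L) (hg : STendsTo (P.nrm α) g s t₀ L')
    (hfB : ∀ t ∈ s, f t - L ∈ P.B α) (hgB : ∀ t ∈ s, g t - L' ∈ P.B α) :
    STendsTo (P.nrm α) (fun t => f t - g t) s t₀ (L - L') := by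
  intro ε hε
  obtain ⟨δ₁, hδ₁, hf⟩ := hf (ε / 2) (half_pos hε)
  obtain ⟨δ₂, hδ₂, hg⟩ := hg (ε / 2) (half_pos hε)
  refine ⟨min δ₁ δ₂, lt_min hδ₁ hδ₂, fun t ht hne hδ => ?_⟩
  rw [sub_sub_sub_comm]
  have := nrm_sub_le hα (hfB t ht) (hgB t ht)
  linarith [hf t ht hne (hδ.trans_le (min_le_left _ _)),
    hg t ht hne (hδ.trans_le (min_le_right _ _))]

theorem _root_.SContinuousOn.exists_nrm_sub_lt {α : ℝ} (hα : α ∈ P.idx) {f : ℝ → P.V}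
    {s : Set ℝ} (hf : SContinuousOn (P.nrm α) f s) {x : ℝ} (hx : x ∈ s) {ε : ℝ} (hε : 0 < ε) :
    ∃ δ > 0, ∀ y ∈ s, |y - x| < δ → P.nrm α (f y - f x) < ε := by
  obtain ⟨δ, hδ, hf⟩ := hf x hx ε hε
  refine ⟨δ, hδ, fun y hy hyx => ?_⟩
  rcases eq_or_ne y x with rfl | hne
  · rwa [sub_self, P.nrm_zero α hα]
  · exact hf y hy hne hyx

theorem _root_.SContinuousOn.continuousOn_nrm {α : ℝ} (hα : α ∈ P.idx) {f : ℝ → P.V}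
    {s : Set ℝ} (hf : SContinuousOn (P.nrm α) f s) (hfB : ∀ t ∈ s, f t ∈ P.B α) :
    ContinuousOn (fun t => P.nrm α (f t)) s := by
  refine fun x hx => Metric.continuousWithinAt_iff.2 fun ε hε => ?_
  obtain ⟨δ, hδ, hf⟩ := hf.exists_nrm_sub_lt hα hx hε
  exact ⟨δ, hδ, fun y hy hyx => (abs_nrm_sub_nrm_le hα (hfB y hy) (hfB x hx)).trans_lt
    (hf y hy hyx)⟩

section Semigroup

variable {μ : ℝ} (hμ : μ ∈ P.idx)
include hμ

theorem S_zero {t : ℝ} (ht : 0 ≤ t) : P.S μ t 0 = 0 := by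
  simpa using P.S_smul μ hμ t ht 0 0 (zero_mem _)

theorem S_sub {t : ℝ} (ht : 0 ≤ t) {u v : P.V} (hu : u ∈ P.C μ) (hv : v ∈ P.C μ) :
    P.S μ t (u - v) = P.S μ t u - P.S μ t v := by
  rw [sub_eq_add_neg, P.S_add μ hμ t ht u hu _ (neg_mem hv), ← neg_one_smul ℝ v,
    P.S_smul μ hμ t ht _ v hv, neg_one_smul, ← sub_eq_add_neg]

theorem S_sub_S_add {a b : ℝ} (ha : 0 ≤ a) (hb : 0 ≤ b) {u v : P.V} (hu : u ∈ P.C μ)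
    (hv : v ∈ P.C μ) : P.S μ a u - P.S μ (a + b) v = P.S μ a (u - P.S μ b v) := by
  rw [S_sub hμ ha hu (P.S_mem μ hμ b hb v hv), P.S_semigroup μ hμ a ha b hb v hv]

end Semigroup

theorem B_le_C {α μ : ℝ} (hα : α ∈ P.idx) (hμ : μ ∈ P.idx) (hαμ : α < μ) : P.B α ≤ P.C μ :=
  (P.B_le_D α hα μ hμ hαμ).trans (P.D_le_C μ hμ)

theorem semigroupBound_pos (R : ℝ) : 0 < P.semigroupBound R :=
  mul_pos (zero_lt_one.trans_le P.one_le_nu) (Real.exp_pos _)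

theorem semigroupBound_mono {R R' : ℝ} (h : R ≤ R') : P.semigroupBound R ≤ P.semigroupBound R' :=
  mul_le_mul_of_nonneg_left (Real.exp_le_exp.2 (mul_le_mul_of_nonneg_left h (abs_nonneg _)))
    (zero_le_one.trans P.one_le_nu)

theorem nrm_S_le {μ : ℝ} (hμ : μ ∈ P.idx) {t R : ℝ} (ht : 0 ≤ t) (htR : t ≤ R) {u : P.V}
    (hu : u ∈ P.C μ) : P.nrm μ (P.S μ t u) ≤ P.semigroupBound R * P.nrm μ u := by
  have hexp : P.nu * Real.exp (P.om * t) ≤ P.semigroupBound R :=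
    (mul_le_mul_of_nonneg_left (Real.exp_le_exp.2 (mul_le_mul_of_nonneg_right (le_abs_self _) ht))
      (zero_le_one.trans P.one_le_nu)).trans (semigroupBound_mono htR)
  exact (P.S_bound μ hμ t ht u hu).trans
    (mul_le_mul_of_nonneg_right hexp (P.nrm_nonneg μ hμ u (P.C_le_B μ hμ hu)))

theorem nrm_S_sub_S_le {μ : ℝ} (hμ : μ ∈ P.idx) {t t₀ R : ℝ} (ht : 0 ≤ t) (htR : t ≤ R)
    (ht₀ : 0 ≤ t₀) {u v : P.V} (hu : u ∈ P.C μ) (hv : v ∈ P.C μ) :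
    P.nrm μ (P.S μ t u - P.S μ t₀ v) ≤
      P.semigroupBound R * P.nrm μ (u - v) + P.nrm μ (P.S μ t v - P.S μ t₀ v) := by
  have hS : ∀ {t}, 0 ≤ t → P.S μ t v ∈ P.B μ := fun ht => P.C_le_B μ hμ (P.S_mem μ hμ _ ht v hv)
  have hsplit : P.S μ t u - P.S μ t₀ v = P.S μ t (u - v) + (P.S μ t v - P.S μ t₀ v) := by
    rw [S_sub hμ ht hu hv]; abel
  rw [hsplit]
  exact (P.nrm_add μ hμ _ (P.C_le_B μ hμ (P.S_mem μ hμ t ht _ (sub_mem hu hv))) _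
    (sub_mem (hS ht) (hS ht₀))).trans
    (add_le_add_left (nrm_S_le hμ ht htR (sub_mem hu hv)) _)

theorem IsSol.mem {α s T : ℝ} {us : P.V} {u : ℝ → P.V} (hu : P.IsSol α s T us u) :
    ∀ t ∈ Ico s (s + T), u t ∈ P.B α :=
  hu.1

theorem IsSol.sContinuousOn {α s T : ℝ} {us : P.V} {u : ℝ → P.V} (hu : P.IsSol α s T us u) :
    SContinuousOn (P.nrm α) u (Ico s (s + T)) :=
  hu.2.1

theorem IsSol.apply_start {α s T : ℝ} {us : P.V} {u : ℝ → P.V} (hu : P.IsSol α s T us u) :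
    u s = us :=
  hu.2.2.2.2

theorem IsSol.sub {α s T : ℝ} (hα : α ∈ P.idx) {us vs : P.V} {u v : ℝ → P.V}
    (hu : P.IsSol α s T us u) (hv : P.IsSol α s T vs v) :
    P.IsSol α s T (us - vs) (u - v) := by
  obtain ⟨huB, huc, huAZ, hud, hu₀⟩ := hu
  obtain ⟨hvB, hvc, hvAZ, hvd, hv₀⟩ := hv
  refine ⟨fun t ht => sub_mem (huB t ht) (hvB t ht), fun t₀ ht₀ => ?_, fun t ht => ?_,
    fun t ht => ?_, by rw [Pi.sub_apply, hu₀, hv₀]⟩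
  · exact (huc t₀ ht₀).sub hα (hvc t₀ ht₀) (fun t ht => sub_mem (huB t ht) (huB t₀ ht₀))
      (fun t ht => sub_mem (hvB t ht) (hvB t₀ ht₀))
  · simp only [Pi.sub_apply, map_sub]
    exact ⟨sub_mem (huAZ t ht).1 (hvAZ t ht).1, sub_mem (huAZ t ht).2 (hvAZ t ht).2⟩
  · have hquot : ∀ {f : ℝ → P.V}, (∀ r ∈ Ico s (s + T), f r ∈ P.B α) →
        P.A (f t) ∈ P.B α ∧ P.Z (f t) ∈ P.B α → ∀ r ∈ Ico s (s + T),
        (r - t)⁻¹ • (f r - f t) - (P.A (f t) + P.Z (f t)) ∈ P.B α :=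
      fun hf hAZ r hr => sub_mem (Submodule.smul_mem _ _ (sub_mem (hf r hr)
        (hf t (Ioo_subset_Ico_self ht)))) (add_mem hAZ.1 hAZ.2)
    unfold SHasDerivWithin
    convert (hud t ht).sub hα (hvd t ht) (hquot huB (huAZ t ht)) (hquot hvB (hvAZ t ht)) using 1
    · funext r
      simp only [Pi.sub_apply, ← smul_sub]
      abel_nf
    · simp only [Pi.sub_apply, map_sub]
      abel

theorem IsSol.restrict {α s T s' T' : ℝ} {us : P.V} {u : ℝ → P.V} (hu : P.IsSol α s T us u)
    (hs : s ≤ s') (hT : s' + T' ≤ s + T) : P.IsSol α s' T' (u s') u := by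
  obtain ⟨huB, huc, huAZ, hud, -⟩ := hu
  have hIco : Ico s' (s' + T') ⊆ Ico s (s + T) := Ico_subset_Ico hs hT
  have hIoo : Ioo s' (s' + T') ⊆ Ioo s (s + T) := Ioo_subset_Ioo hs hT
  exact ⟨fun t ht => huB t (hIco ht), fun t ht => (huc t (hIco ht)).mono hIco,
    fun t ht => huAZ t (hIoo ht), fun t ht => STendsTo.mono (hud t (hIoo ht)) hIco, rfl⟩

section Duhamel

variable {α μ s T : ℝ} (hα : α ∈ P.idx) (hμ : μ ∈ P.idx) (hαμ : α < μ)
include hα hμ hαμ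

theorem IsSol.sContinuousOn_S {us : P.V} {w : ℝ → P.V} (hw : P.IsSol α s T us w) {c₀ : ℝ}
    (hc₀ : c₀ < s + T) :
    SContinuousOn (P.nrm μ) (fun r => P.S μ (c₀ - r) (w r)) (Icc s c₀) := by
  obtain ⟨hwB, hwc, -⟩ := hw
  have hIcc : Icc s c₀ ⊆ Ico s (s + T) := Icc_subset_Ico_right hc₀
  have hC : ∀ r ∈ Icc s c₀, w r ∈ P.C μ := fun r hr =>
    B_le_C hα hμ hαμ (hwB r (hIcc hr))
  set E := P.semigroupBound (c₀ - s)
  have hE : 0 < E := P.semigroupBound_pos _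
  intro x hx ε hε
  obtain ⟨δ₁, hδ₁, hwx⟩ := hwc.exists_nrm_sub_lt hα (hIcc hx) (ε := ε / (2 * E)) (by positivity)
  obtain ⟨δ₂, hδ₂, hSx⟩ := P.S_cont μ hμ (w x) (hC x hx) (c₀ - x) (by linarith [hx.2]) (ε / 2)
    (half_pos hε)
  refine ⟨min δ₁ δ₂, lt_min hδ₁ hδ₂, fun y hy _ hyx => ?_⟩
  have h₁ := hwx y (hIcc hy) (hyx.trans_le (min_le_left _ _))
  have h₂ := hSx (c₀ - y) (by linarith [hy.2]) (by
    rw [sub_sub_sub_cancel_left, abs_sub_comm]; exact hyx.trans_le (min_le_right _ _))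
  calc P.nrm μ (P.S μ (c₀ - y) (w y) - P.S μ (c₀ - x) (w x))
      ≤ E * P.nrm μ (w y - w x) + P.nrm μ (P.S μ (c₀ - y) (w x) - P.S μ (c₀ - x) (w x)) :=
        nrm_S_sub_S_le hμ (by linarith [hy.2]) (by linarith [hy.1]) (by linarith [hx.2])
          (hC y hy) (hC x hx)
    _ ≤ E * P.nrm α (w y - w x) + P.nrm μ (P.S μ (c₀ - y) (w x) - P.S μ (c₀ - x) (w x)) := by
        gcongr
        exact P.nrm_mono α hα μ hμ hαμ.le _ (sub_mem (hwB y (hIcc hy)) (hwB x (hIcc hx)))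
    _ < E * (ε / (2 * E)) + ε / 2 := by gcongr
    _ = ε := by field_simp; ring

theorem IsSol.eventually_nrm_sub_S_le {us : P.V} {w : ℝ → P.V} (hw : P.IsSol α s T us w)
    {x : ℝ} (hx : x ∈ Ioo s (s + T)) {ε : ℝ} (hε : 0 < ε) :
    ∀ᶠ z in 𝓝[>] x,
      P.nrm μ (w z - P.S μ (z - x) (w x)) ≤ (z - x) * (P.nrm μ (P.Z (w x)) + ε) := by
  obtain ⟨hwB, -, hwAZ, hwd, -⟩ := hw
  obtain ⟨hA, hZ⟩ := hwAZ x hx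
  have hxB := hwB x (Ioo_subset_Ico_self hx)
  have hBμ : ∀ {u}, u ∈ P.B α → u ∈ P.B μ := fun hu => P.B_mono α hα μ hμ hαμ.le hu
  obtain ⟨δ₁, hδ₁, hd⟩ := hwd x hx (ε / 2) (half_pos hε)
  obtain ⟨δ₂, hδ₂, hg⟩ := P.S_gen μ hμ (w x) (P.B_le_D α hα μ hμ hαμ hxB) (ε / 2) (half_pos hε)
  filter_upwards [Ioo_mem_nhdsGT (lt_min (lt_min (lt_add_of_pos_right x hδ₁)
    (lt_add_of_pos_right x hδ₂)) hx.2)] with z hz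
  simp only [mem_Ioo, lt_min_iff] at hz
  obtain ⟨hxz, ⟨hz₁, hz₂⟩, hzT⟩ := hz
  set h := z - x
  have hh : 0 < h := sub_pos.2 hxz
  have hSx : P.S μ h (w x) ∈ P.B μ :=
    P.C_le_B μ hμ (P.S_mem μ hμ h hh.le _ (B_le_C hα hμ hαμ hxB))
  set D₁ := h⁻¹ • (w z - w x) - (P.A (w x) + P.Z (w x))
  set D₂ := h⁻¹ • (P.S μ h (w x) - w x) - P.A (w x)
  have hD₁B : D₁ ∈ P.B α := sub_mem (Submodule.smul_mem _ _
    (sub_mem (hwB z ⟨hx.1.le.trans hxz.le, hzT⟩) hxB)) (add_mem hA hZ)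
  have hD₂B : D₂ ∈ P.B μ := sub_mem (Submodule.smul_mem _ _ (sub_mem hSx (hBμ hxB))) (hBμ hA)
  have hD₁ : P.nrm μ D₁ ≤ ε / 2 := (P.nrm_mono α hα μ hμ hαμ.le _ hD₁B).trans
    (hd z ⟨hx.1.le.trans hxz.le, hzT⟩ hxz.ne' (by rw [abs_of_pos hh]; linarith)).le
  have hD₂ : P.nrm μ D₂ ≤ ε / 2 := (hg h hh (by linarith)).le
  -- the `A`-parts of `w'(x)` and of the generator of `S μ` cancel
  have hsplit : w z - P.S μ h (w x) = h • (D₁ - D₂ + P.Z (w x)) := by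
    simp only [D₁, D₂, smul_add, smul_sub, smul_smul, mul_inv_cancel₀ hh.ne', one_smul]
    abel
  rw [hsplit, P.nrm_smul μ hμ _ _ (add_mem (sub_mem (hBμ hD₁B) hD₂B) (hBμ hZ)), abs_of_pos hh]
  gcongr
  calc P.nrm μ (D₁ - D₂ + P.Z (w x)) ≤ P.nrm μ (D₁ - D₂) + P.nrm μ (P.Z (w x)) :=
        P.nrm_add μ hμ _ (sub_mem (hBμ hD₁B) hD₂B) _ (hBμ hZ)
    _ ≤ P.nrm μ D₁ + P.nrm μ D₂ + P.nrm μ (P.Z (w x)) := by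
        gcongr; exact nrm_sub_le hμ (hBμ hD₁B) hD₂B
    _ ≤ P.nrm μ (P.Z (w x)) + ε := by linarith

theorem IsSol.nrm_le_of_hasDerivAt {w : ℝ → P.V} (hw : P.IsSol α s T 0 w) {c₀ R : ℝ}
    (hc₀ : c₀ ∈ Ico s (s + T)) (hR : c₀ - s ≤ R) {H H' : ℝ → ℝ}
    (hH : ∀ x, HasDerivAt H (H' x) x)
    (hZ : ∀ x ∈ Ioo s c₀, P.semigroupBound R * P.nrm μ (P.Z (w x)) ≤ H' x) :
    P.nrm μ (w c₀) ≤ H c₀ - H s := by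
  have hIcc : Icc s c₀ ⊆ Ico s (s + T) := Icc_subset_Ico_right hc₀.2
  have hC : ∀ r ∈ Icc s c₀, w r ∈ P.C μ := fun r hr =>
    B_le_C hα hμ hαμ (hw.mem r (hIcc hr))
  set g := fun r => P.S μ (c₀ - r) (w r)
  have hgB : ∀ r ∈ Icc s c₀, g r ∈ P.B μ := fun r hr =>
    P.C_le_B μ hμ (P.S_mem μ hμ _ (by linarith [hr.2]) _ (hC r hr))
  have key := image_sub_le_of_slope_right_lt hc₀.1
    ((hw.sContinuousOn_S hα hμ hαμ hc₀.2).continuousOn_nrm hμ hgB) hH ?_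
  · have hgc₀ : g c₀ = w c₀ := by
      simp only [g, sub_self]; exact P.S_id μ hμ _ (hC c₀ ⟨hc₀.1, le_rfl⟩)
    have hgs : g s = 0 := by
      simp only [g, hw.apply_start]; exact S_zero hμ (by linarith [hc₀.1])
    change P.nrm μ (g c₀) - P.nrm μ (g s) ≤ _ at key
    rwa [hgc₀, hgs, P.nrm_zero μ hμ, sub_zero] at key
  intro x hx r hr
  set E := P.semigroupBound R
  have hE : 0 < E := P.semigroupBound_pos R
  have hxI : x ∈ Icc s c₀ := Ioo_subset_Icc_self hx
  filter_upwards [hw.eventually_nrm_sub_S_le hα hμ hαμ ⟨hx.1, hx.2.trans hc₀.2⟩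
    (ε := (r - H' x) / (2 * E)) (div_pos (sub_pos.2 hr) (by positivity)),
    Ioo_mem_nhdsGT hx.2] with z hz hzc
  have hxz : 0 < z - x := sub_pos.2 hzc.1
  have hzI : z ∈ Icc s c₀ := ⟨hx.1.le.trans hzc.1.le, hzc.2.le⟩
  rw [slope_def_field, div_lt_iff₀ hxz]
  calc P.nrm μ (g z) - P.nrm μ (g x) ≤ P.nrm μ (g z - g x) :=
        (le_abs_self _).trans (abs_nrm_sub_nrm_le hμ (hgB z hzI) (hgB x hxI))
    _ = P.nrm μ (P.S μ (c₀ - z) (w z - P.S μ (z - x) (w x))) := by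
        rw [← S_sub_S_add hμ (by linarith [hzc.2]) hxz.le (hC z hzI) (hC x hxI),
          sub_add_sub_cancel]
    _ ≤ E * P.nrm μ (w z - P.S μ (z - x) (w x)) :=
        nrm_S_le hμ (by linarith [hzc.2]) (by linarith [hzc.1, hx.1])
          (sub_mem (hC z hzI) (P.S_mem μ hμ _ hxz.le _ (hC x hxI)))
    _ ≤ E * ((z - x) * (P.nrm μ (P.Z (w x)) + (r - H' x) / (2 * E))) := by gcongr
    _ = (z - x) * (E * P.nrm μ (P.Z (w x)) + (r - H' x) / 2) := by field_simp
    _ < (z - x) * r := by gcongr; linarith [hZ x hx]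
    _ = r * (z - x) := mul_comm _ _

end Duhamel

section Ovsyannikov

variable {α β s T : ℝ} (hα : α ∈ P.idx) (hβ : β ∈ P.idx)
include hα hβ

theorem IsSol.nrm_le_pow_succ {w : ℝ → P.V} (hw : P.IsSol α s T 0 w) {α' α'' : ℝ}
    (hαα' : α ≤ α') (hα'α'' : α' < α'') (hα''β : α'' ≤ β) {t R : ℝ} (ht : t ∈ Ico s (s + T))
    (hR : t - s ≤ R) {K L : ℝ} {k : ℕ}
    (hL : P.semigroupBound R * (P.M β / (α'' - α') + P.Nf β) ≤ L)
    (hk : ∀ c ∈ Icc s t, P.nrm α' (w c) ≤ K * (L * (c - s)) ^ k / k !) :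
    ∀ c ∈ Icc s t, P.nrm α'' (w c) ≤ K * (L * (c - s)) ^ (k + 1) / (k + 1)! := by
  have hα' : α' ∈ P.idx := P.ordConnected_idx.out hα hβ ⟨hαα', hα'α''.le.trans hα''β⟩
  have hα'' : α'' ∈ P.idx := P.ordConnected_idx.out hα hβ ⟨hαα'.trans hα'α''.le, hα''β⟩
  have hL₀ : 0 ≤ L := (mul_pos (P.semigroupBound_pos R) (add_pos (div_pos (P.M_pos β hβ)
    (sub_pos.2 hα'α'')) (P.N_pos β hβ))).le.trans hL
  have hH : ∀ x, HasDerivAt (fun r => K * (L * (r - s)) ^ (k + 1) / (k + 1)!)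
      (L * (K * (L * (x - s)) ^ k / k !)) x := fun x => by
    refine ((((hasDerivAt_id x).sub_const s).const_mul L).pow (k + 1)).const_mul K
      |>.div_const ((k + 1)! : ℝ) |>.congr_deriv ?_
    simp only [id, Nat.factorial_succ]
    push_cast
    field_simp
  intro c hc
  have hc' : c ∈ Ico s (s + T) := ⟨hc.1, hc.2.trans_lt ht.2⟩
  have key := hw.nrm_le_of_hasDerivAt hα hα'' (hαα'.trans_lt hα'α'') hc'
    ((sub_le_sub_right hc.2 s).trans hR) hH fun x hx => ?_
  · simpa using key
  have hxB : w x ∈ P.B α' :=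
    P.B_mono α hα α' hα' hαα' (hw.mem x ⟨hx.1.le, hx.2.trans hc'.2⟩)
  calc P.semigroupBound R * P.nrm α'' (P.Z (w x))
      ≤ P.semigroupBound R * ((P.M β / (α'' - α') + P.Nf β) * P.nrm α' (w x)) := by
        gcongr
        · exact (P.semigroupBound_pos R).le
        · exact P.Z_bound β hβ α' α'' (P.aLow_lt hα') hα'α'' hα''β _ hxB
    _ = P.semigroupBound R * (P.M β / (α'' - α') + P.Nf β) * P.nrm α' (w x) := by ring
    _ ≤ L * (K * (L * (x - s)) ^ k / k !) :=
        mul_le_mul hL (hk x ⟨hx.1.le, hx.2.le.trans hc.2⟩) (P.nrm_nonneg α' hα' _ hxB) hL₀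

theorem IsSol.nrm_le_pow_div_factorial (hαβ : α < β) {w : ℝ → P.V} (hw : P.IsSol α s T 0 w)
    {t R : ℝ} (ht : t ∈ Ico s (s + T)) (hR : t - s ≤ R) {K : ℝ}
    (hK : ∀ c ∈ Icc s t, P.nrm α (w c) ≤ K) {n : ℕ} (hn : 0 < n) {L : ℝ}
    (hL : P.semigroupBound R * (n * P.M β / (β - α) + P.Nf β) ≤ L) :
    P.nrm β (w t) ≤ K * (L * (t - s)) ^ n / n ! := by
  set δ := (β - α) / n
  have hδ : 0 < δ := div_pos (sub_pos.2 hαβ) (Nat.cast_pos.2 hn)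
  have hnδ : n * δ = β - α := by simp only [δ]; field_simp
  have hLδ : P.semigroupBound R * (P.M β / δ + P.Nf β) ≤ L := by
    convert hL using 3; simp only [δ]; field_simp
  have key : ∀ k ≤ n, ∀ c ∈ Icc s t, P.nrm (α + k * δ) (w c) ≤ K * (L * (c - s)) ^ k / k ! := by
    intro k
    induction k with
    | zero => intro _ c hc; simpa using hK c hc
    | succ k ih =>
      intro hk
      have hk' : ((k + 1 : ℕ) : ℝ) ≤ n := by exact_mod_cast hk
      push_cast at hk' ⊢
      refine hw.nrm_le_pow_succ hα hβ (le_add_of_nonneg_right (by positivity)) (by linarith) ?_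
        ht hR ?_ (ih (by omega))
      · nlinarith
      · rwa [show α + (k + 1) * δ - (α + k * δ) = δ by ring]
  simpa [show α + n * δ = β by linarith] using key n le_rfl t ⟨ht.1, le_rfl⟩

theorem IsSol.eq_zero_of_sub_le (hαβ : α < β) {w : ℝ → P.V} (hw : P.IsSol α s T 0 w) {t R : ℝ}
    (hTR : T ≤ R) (ht : t ∈ Ico s (s + T))
    (hts : P.semigroupBound R * (P.M β / (β - α) + P.Nf β) * (t - s) ≤ (2 * Real.exp 1)⁻¹) :
    w t = 0 := by
  set Q := P.semigroupBound R * (P.M β / (β - α) + P.Nf β)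
  have hQ : 0 < Q := mul_pos (P.semigroupBound_pos R)
    (add_pos (div_pos (P.M_pos β hβ) (sub_pos.2 hαβ)) (P.N_pos β hβ))
  obtain ⟨K, hK⟩ := isCompact_Icc.bddAbove_image
    ((hw.sContinuousOn.continuousOn_nrm hα hw.mem).mono (Icc_subset_Ico_right ht.2))
  have hK' : ∀ c ∈ Icc s t, P.nrm α (w c) ≤ K := fun c hc => hK ⟨c, hc, rfl⟩
  have hK₀ : 0 ≤ K := (P.nrm_nonneg α hα _ (hw.mem t ht)).trans (hK' t ⟨ht.1, le_rfl⟩)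
  have hts₀ : 0 ≤ t - s := sub_nonneg.2 ht.1
  have hbound : ∀ n : ℕ, 0 < n → P.nrm β (w t) ≤ K * (1 / 2) ^ n := by
    intro n hn
    have hn₁ : (1 : ℝ) ≤ n := by exact_mod_cast hn
    have hL : P.semigroupBound R * (n * P.M β / (β - α) + P.Nf β) ≤ n * Q := by
      rw [mul_div_assoc]
      nlinarith [mul_nonneg (sub_nonneg.2 hn₁) (mul_pos (P.semigroupBound_pos R) (P.N_pos β hβ)).le]
    refine (hw.nrm_le_pow_div_factorial hα hβ hαβ ht (by linarith [ht.2]) hK' hn hL).trans ?_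
    rw [mul_div_assoc]
    gcongr
    refine pow_div_factorial_le_half_pow (by positivity) ?_
    calc n * Q * (t - s) = n * (Q * (t - s)) := mul_assoc _ _ _
      _ ≤ n * (2 * Real.exp 1)⁻¹ := by gcongr
      _ = n / (2 * Real.exp 1) := (div_eq_mul_inv _ _).symm
  have hlim : Tendsto (fun n : ℕ => K * (1 / 2 : ℝ) ^ n) atTop (𝓝 0) := by
    simpa using (tendsto_pow_atTop_nhds_zero_of_lt_one (by norm_num : (0 : ℝ) ≤ 1 / 2)
      (by norm_num)).const_mul K
  have hwtB : w t ∈ P.B β := P.B_mono α hα β hβ hαβ.le (hw.mem t ht)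
  refine P.nrm_eq_zero β hβ _ hwtB (le_antisymm ?_ (P.nrm_nonneg β hβ _ hwtB))
  exact ge_of_tendsto hlim (eventually_atTop.2 ⟨1, hbound⟩)

end Ovsyannikov

theorem IsSol.eq_zero {α s T : ℝ} (hα : α ∈ P.idx) {w : ℝ → P.V} (hw : P.IsSol α s T 0 w) :
    ∀ t ∈ Ico s (s + T), w t = 0 := by
  obtain ⟨β, hβ, hαβ⟩ := P.exists_gt_mem_idx hα
  set Q := P.semigroupBound T * (P.M β / (β - α) + P.Nf β)
  have hQ : 0 < Q := mul_pos (P.semigroupBound_pos T)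
    (add_pos (div_pos (P.M_pos β hβ) (sub_pos.2 hαβ)) (P.N_pos β hβ))
  set Δ := (2 * Real.exp 1 * Q)⁻¹
  have hΔ : 0 < Δ := by positivity
  have hstep : ∀ m : ℕ, ∀ t ∈ Ico s (s + T), t ≤ s + m * Δ → w t = 0 := by
    intro m
    induction m with
    | zero =>
      intro t ht hts
      rw [le_antisymm (by simpa using hts) ht.1]
      exact hw.apply_start
    | succ m ih =>
      intro t ht hts
      set s' := s + m * Δ
      by_cases hts' : t ≤ s'
      · exact ih t ht hts'
      push Not at hts'
      have hs' : s ≤ s' := le_add_of_nonneg_right (by positivity)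
      have hw' := hw.restrict (s' := s') (T' := s + T - s') hs' (by linarith)
      rw [ih s' ⟨hs', hts'.trans ht.2⟩ le_rfl] at hw'
      refine hw'.eq_zero_of_sub_le hα hβ hαβ (R := T) (by linarith) ⟨hts'.le, by linarith [ht.2]⟩ ?_
      calc Q * (t - s') ≤ Q * Δ := by push_cast at hts; gcongr; linarith
        _ = (2 * Real.exp 1)⁻¹ := by simp only [Δ]; field_simp
  intro t ht
  obtain ⟨m, hm⟩ := exists_nat_ge ((t - s) / Δ)
  exact hstep m t ht (by rw [div_le_iff₀ hΔ] at hm; linarith)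

end OvsSystem

theorem uniqueness_in_scale_general (P : OvsSystem) (αst : ℝ) (hαst : αst ∈ P.idx)
    (T : ℝ) (s : ℝ) (τ : ℝ)
    (u₁ u₂ : ℝ → P.V) (uτ : P.V)
    (h₁ : P.IsSol αst τ (s + T - τ) uτ u₁)
    (h₂ : P.IsSol αst τ (s + T - τ) uτ u₂) :
    ∀ t ∈ Set.Ioo τ (s + T), u₁ t = u₂ t := by
  intro t ht
  have hw := h₁.sub hαst h₂
  rw [sub_self] at hw
  exact sub_eq_zero.1 (hw.eq_zero hαst t ⟨ht.1.le, by linarith [ht.2]⟩)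

/-- **Theorem (uniqueness).** Under Assumptions 1–3, let `α* ∈ I`, `T > 0`, `s ≥ 0`,
`τ ∈ [s, s+T)`, and let `u₁, u₂ : [τ, s+T) → B_{α*}` be continuous functions solving
`d/dt u = Au + Zu` on `(τ, s+T)` in `B_{α*}`. If there is `α_τ ∈ (α̲, α*)` with
`τ + T(α_τ, α*) ≥ s + T` and `u₁(τ) = u₂(τ) ∈ B_{α_τ}`, then `u₁(t) = u₂(t)` in
`B_{α*}` for all `t ∈ (τ, s+T)`. -/
theorem uniqueness_in_scale (P : OvsSystem) (αst : ℝ) (hαst : αst ∈ P.idx)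
    (T : ℝ) (hT : 0 < T) (s : ℝ) (hs : 0 ≤ s) (τ : ℝ) (hτ : τ ∈ Set.Ico s (s + T))
    (u₁ u₂ : ℝ → P.V) (uτ : P.V)
    (h₁ : P.IsSol αst τ (s + T - τ) uτ u₁)
    (h₂ : P.IsSol αst τ (s + T - τ) uτ u₂)
    (ατ : ℝ) (hατ : ατ ∈ Set.Ioo P.aLow αst)
    (hτT : s + T ≤ τ + P.Tt ατ αst)
    (huτ : uτ ∈ P.B ατ) :
    ∀ t ∈ Set.Ioo τ (s + T), u₁ t = u₂ t :=
  uniqueness_in_scale_general P αst hαst T s τ u₁ u₂ uτ h₁ h₂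
end
end

section
/- Let x₀ = (1 + √5)/2 and let b be a real number with 0 < 2b < (2 − x₀) e^{−x₀}, i.e. 0 < b < ((3 − √5)/4) e^{−(1+√5)/2}. Define f : (0, ∞) → ℝ by f(x) = x e^{−x} + b x². Then f has two points of local extremum on (0, ∞), and there exists c > 0 such that the equation f(x) = c has (at least) three distinct positive solutions x₁ < x₂ < x₃. -/
/-!
Write `f x = x e^{-x} + b x²` and `φ = (1 + √5)/2`. Since `φ² = φ + 1`, we have
`(2 - φ) φ = φ - 1`, so the hypothesis on `b` says exactly that
`f'(φ) = (1 - φ) e^{-φ} + 2 b φ < 0`. As `f 0 = 0 < f φ`, the maximum of `f` on `[0, φ]` lies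
in the open interval and is a local maximum; as `f → ∞`, the minimum of `f` on `[φ, M]`, for
`M` large, is an interior local minimum. Any level strictly between the two extremal values is
then attained on each of `(0, x₁)`, `(x₁, x₂)` and `(x₂, M)`.
-/

open Real Filter Set Topology

section Extrema

variable {α β : Type*} [ConditionallyCompleteLinearOrder α] [TopologicalSpace α]
  [OrderTopology α] [LinearOrder β] [TopologicalSpace β] [OrderClosedTopology β]
  {f : α → β} {a b t : α}

theorem exists_isLocalMax_mem_Ioo (hf : ContinuousOn f (Icc a b)) (ht : t ∈ Icc a b)
    (ha : f a < f t) (hb : f b < f t) : ∃ x ∈ Ioo a b, IsLocalMax f x ∧ f t ≤ f x := by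
  obtain ⟨x, hx, hmax⟩ := isCompact_Icc.exists_isMaxOn ⟨t, ht⟩ hf
  have hax : a ≠ x := fun h => (ha.trans_le (h ▸ hmax ht)).false
  have hxb : x ≠ b := fun h => (hb.trans_le (h ▸ hmax ht)).false
  have hx' : x ∈ Ioo a b := ⟨hx.1.lt_of_ne hax, hx.2.lt_of_ne hxb⟩
  exact ⟨x, hx', hmax.isLocalMax (Icc_mem_nhds hx'.1 hx'.2), hmax ht⟩

theorem exists_isLocalMin_mem_Ioo (hf : ContinuousOn f (Icc a b)) (ht : t ∈ Icc a b)
    (ha : f t < f a) (hb : f t < f b) : ∃ x ∈ Ioo a b, IsLocalMin f x ∧ f x ≤ f t :=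
  exists_isLocalMax_mem_Ioo (β := βᵒᵈ) hf ht ha hb

end Extrema

theorem exists_three_eq_of_continuousOn {α β : Type*} [ConditionallyCompleteLinearOrder α]
    [TopologicalSpace α] [OrderTopology α] [DenselyOrdered α] [LinearOrder β]
    [TopologicalSpace β] [OrderClosedTopology β] {f : α → β} {a x₁ x₂ M : α} {c : β}
    (hf : ContinuousOn f (Icc a M)) (h₁ : a < x₁) (h₁₂ : x₁ < x₂) (h₂ : x₂ < M)
    (ha : f a < c) (hx₁ : c < f x₁) (hx₂ : f x₂ < c) (hM : c < f M) :
    ∃ y₁ y₂ y₃, a < y₁ ∧ y₁ < y₂ ∧ y₂ < y₃ ∧ f y₁ = c ∧ f y₂ = c ∧ f y₃ = c := by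
  obtain ⟨y₁, hy₁, hfy₁⟩ :=
    intermediate_value_Ioo h₁.le (hf.mono (Icc_subset_Icc le_rfl (h₁₂.trans h₂).le)) ⟨ha, hx₁⟩
  obtain ⟨y₂, hy₂, hfy₂⟩ :=
    intermediate_value_Ioo' h₁₂.le (hf.mono (Icc_subset_Icc h₁.le h₂.le)) ⟨hx₂, hx₁⟩
  obtain ⟨y₃, hy₃, hfy₃⟩ :=
    intermediate_value_Ioo h₂.le (hf.mono (Icc_subset_Icc (h₁.trans h₁₂).le le_rfl)) ⟨hx₂, hM⟩
  exact ⟨y₁, y₂, y₃, hy₁.1, hy₁.2.trans hy₂.1, hy₂.2.trans hy₃.1, hfy₁, hfy₂, hfy₃⟩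

section DerivNeg

variable {f : ℝ → ℝ} {f' x : ℝ}

theorem HasDerivAt.exists_left_gt_of_neg (hf : HasDerivAt f f' x) (hf' : f' < 0) {a : ℝ}
    (ha : a < x) : ∃ t ∈ Ioo a x, f x < f t := by
  have hslope : ∀ᶠ t in 𝓝[<] x, slope f x t < 0 :=
    ((hasDerivAt_iff_tendsto_slope.mp hf).eventually_lt_const hf').filter_mono
      (nhdsWithin_mono x fun _ ht => ne_of_lt ht)
  obtain ⟨t, ht, hst⟩ := (Filter.eventually_mem_set.mpr (Ioo_mem_nhdsLT ha)).and hslope |>.exists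
  refine ⟨t, ht, ?_⟩
  rw [slope_def_field, div_neg_iff] at hst
  rcases hst with ⟨h₁, h₂⟩ | ⟨h₁, h₂⟩ <;> linarith [ht.2]

theorem HasDerivAt.exists_right_lt_of_neg (hf : HasDerivAt f f' x) (hf' : f' < 0) {b : ℝ}
    (hb : x < b) : ∃ u ∈ Ioo x b, f u < f x := by
  have hslope : ∀ᶠ u in 𝓝[>] x, slope f x u < 0 :=
    ((hasDerivAt_iff_tendsto_slope.mp hf).eventually_lt_const hf').filter_mono
      (nhdsWithin_mono x fun _ hu => ne_of_gt hu)
  obtain ⟨u, hu, hsu⟩ := (Filter.eventually_mem_set.mpr (Ioo_mem_nhdsGT hb)).and hslope |>.exists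
  refine ⟨u, hu, ?_⟩
  rw [slope_def_field, div_neg_iff] at hsu
  rcases hsu with ⟨h₁, h₂⟩ | ⟨h₁, h₂⟩ <;> linarith [hu.1]

end DerivNeg

/-- The `f` of the stationarity condition `f(⟨φ⟩ρ) = λ⟨φ⟩/m`. -/
noncomputable def stationarityFun (b x : ℝ) : ℝ := x * exp (-x) + b * x ^ 2

namespace stationarityFun

variable {b : ℝ}

theorem zero (b : ℝ) : stationarityFun b 0 = 0 := by simp [stationarityFun]

theorem pos_of_pos (hb : 0 < b) {x : ℝ} (hx : 0 < x) : 0 < stationarityFun b x := by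
  unfold stationarityFun; positivity

theorem hasDerivAt (b x : ℝ) :
    HasDerivAt (stationarityFun b) ((1 - x) * exp (-x) + 2 * b * x) x := by
  refine (((hasDerivAt_id' x).mul (hasDerivAt_neg x).exp).add
    ((hasDerivAt_pow 2 x).const_mul b)).congr_deriv ?_
  push_cast
  ring

theorem continuous (b : ℝ) : Continuous (stationarityFun b) := by
  unfold stationarityFun; fun_prop

theorem tendsto_atTop (hb : 0 < b) : Tendsto (stationarityFun b) atTop atTop := by
  refine tendsto_atTop_mono' _ ?_ ((tendsto_pow_atTop two_ne_zero).const_mul_atTop hb)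
  filter_upwards [eventually_ge_atTop 0] with x hx
  unfold stationarityFun
  have := exp_pos (-x)
  nlinarith

theorem deriv_goldenRatio_neg (hb : 2 * b < (2 - goldenRatio) * exp (-goldenRatio)) :
    (1 - goldenRatio) * exp (-goldenRatio) + 2 * b * goldenRatio < 0 := by
  calc (1 - goldenRatio) * exp (-goldenRatio) + 2 * b * goldenRatio
      < (1 - goldenRatio) * exp (-goldenRatio)
          + (2 - goldenRatio) * exp (-goldenRatio) * goldenRatio := by
        gcongr
    _ = 0 := by linear_combination (-exp (-goldenRatio)) * goldenRatio_sq

theorem exists_isLocalMax_isLocalMin (hb : 0 < b)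
    (hb2 : 2 * b < (2 - goldenRatio) * exp (-goldenRatio)) :
    ∃ x₁ x₂ M, 0 < x₁ ∧ x₁ < x₂ ∧ x₂ < M ∧
      IsLocalMax (stationarityFun b) x₁ ∧ IsLocalMin (stationarityFun b) x₂ ∧
      stationarityFun b x₂ < stationarityFun b x₁ ∧
      stationarityFun b x₁ < stationarityFun b M := by
  have hderiv := hasDerivAt b goldenRatio
  have hneg := deriv_goldenRatio_neg hb2
  obtain ⟨t, ht, hft⟩ := hderiv.exists_left_gt_of_neg hneg goldenRatio_pos
  obtain ⟨x₁, hx₁, hmax, hftx₁⟩ := exists_isLocalMax_mem_Ioo (continuous b).continuousOn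
    (Ioo_subset_Icc_self ht) (by rw [zero]; linarith [pos_of_pos hb ht.1]) hft
  obtain ⟨M, hM, hφM⟩ :=
    ((tendsto_atTop hb).eventually_gt_atTop (stationarityFun b x₁)).and (eventually_gt_atTop goldenRatio)
      |>.exists
  obtain ⟨u, hu, hfu⟩ := hderiv.exists_right_lt_of_neg hneg hφM
  obtain ⟨x₂, hx₂, hmin, hfx₂u⟩ := exists_isLocalMin_mem_Ioo (continuous b).continuousOn
    (Ioo_subset_Icc_self hu) hfu (by linarith)
  exact ⟨x₁, x₂, M, hx₁.1, hx₁.2.trans hx₂.1, hx₂.2, hmax, hmin, by linarith, hM⟩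

end stationarityFun

/-- If `x₀ = (1 + √5)/2` and `0 < 2b < (2 − x₀)e^{−x₀}`, then
`f(x) = x e^{−x} + b x²` has two points of local extremum on `(0, ∞)` (a local
maximum followed by a local minimum), and there exists `c > 0` such that the
equation `f(x) = c` has three distinct positive solutions. -/
theorem three_stationary_points (b : ℝ) (hb : 0 < 2 * b)
    (hb2 : 2 * b <
      (2 - (1 + Real.sqrt 5) / 2) * Real.exp (-((1 + Real.sqrt 5) / 2))) :
    (∃ x₁ x₂ : ℝ, 0 < x₁ ∧ x₁ < x₂ ∧
      IsLocalMax (fun x : ℝ => x * Real.exp (-x) + b * x ^ 2) x₁ ∧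
      IsLocalMin (fun x : ℝ => x * Real.exp (-x) + b * x ^ 2) x₂) ∧
    ∃ c > (0:ℝ), ∃ y₁ y₂ y₃ : ℝ, 0 < y₁ ∧ y₁ < y₂ ∧ y₂ < y₃ ∧
      y₁ * Real.exp (-y₁) + b * y₁ ^ 2 = c ∧
      y₂ * Real.exp (-y₂) + b * y₂ ^ 2 = c ∧
      y₃ * Real.exp (-y₃) + b * y₃ ^ 2 = c := by
  have hb' : 0 < b := by linarith
  obtain ⟨x₁, x₂, M, hx₁, hx₁₂, hx₂M, hmax, hmin, hf₂₁, hf₁M⟩ :=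
    stationarityFun.exists_isLocalMax_isLocalMin hb' hb2
  have hf₂ := stationarityFun.pos_of_pos hb' (hx₁.trans hx₁₂)
  set c := (stationarityFun b x₁ + stationarityFun b x₂) / 2 with hc
  obtain ⟨y₁, y₂, y₃, hy₁, hy₁₂, hy₂₃, hfy₁, hfy₂, hfy₃⟩ :=
    exists_three_eq_of_continuousOn (stationarityFun.continuous b).continuousOn hx₁ hx₁₂ hx₂M
      (c := c) (by rw [stationarityFun.zero]; linarith [hc]) (by linarith [hc]) (by linarith [hc])
      (by linarith [hc])
  exact ⟨⟨x₁, x₂, hx₁, hx₁₂, hmax, hmin⟩, c, by linarith [hc], y₁, y₂, y₃, hy₁, hy₁₂, hy₂₃, hfy₁,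
    hfy₂, hfy₃⟩
end

section
/- Let x₀ = (1 + √5)/2 and let b be a real number with 2b ≥ (2 − x₀) e^{−x₀}. Define f : (0, ∞) → ℝ by f(x) = x e^{−x} + b x². Then for every c > 0 the equation f(x) = c has exactly one positive solution; equivalently, f is injective on (0, ∞) (indeed strictly increasing there) and maps (0, ∞) onto (0, ∞). -/
/-!
Writing `φ = (1 + √5)/2`, the derivative of `x e^{-x} + b x²` is `(1 - x) e^{-x} + 2 b x`, and the
line `x ↦ (2 - φ) e^{-φ} x` lies strictly above `(x - 1) e^{-x}` on `(0, ∞)` except at its point of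
tangency `x = φ`. So the derivative is positive on `(0, ∞)` away from `φ`, which still gives strict
monotonicity; since `b > 0`, the function runs from `0` at `x = 0` to `+∞`.
-/

open Real Set Filter

open scoped goldenRatio

theorem strictMonoOn_of_deriv_pos_of_ne {D : Set ℝ} (hD : Convex ℝ D) {f : ℝ → ℝ} {a : ℝ}
    (hf : ContinuousOn f D) (hf' : ∀ x ∈ interior D, x ≠ a → 0 < deriv f x) :
    StrictMonoOn f D := by
  have off_a : ∀ u ∈ D, ∀ v ∈ D, u < v → a ∉ Ioo u v → f u < f v := by
    intro u hu v hv huv ha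
    have hsub : Icc u v ⊆ D := hD.ordConnected.out hu hv
    refine strictMonoOn_of_deriv_pos (convex_Icc u v) (hf.mono hsub) (fun z hz => ?_)
      (left_mem_Icc.2 huv.le) (right_mem_Icc.2 huv.le) huv
    rw [interior_Icc] at hz
    exact hf' z (interior_maximal (Ioo_subset_Icc_self.trans hsub) isOpen_Ioo hz)
      (ne_of_mem_of_not_mem hz ha)
  intro x hx y hy hxy
  by_cases ha : a ∈ Ioo x y
  · have haD : a ∈ D := hD.ordConnected.out hx hy (Ioo_subset_Icc_self ha)
    exact (off_a x hx a haD ha.1 fun h => h.2.false).trans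
      (off_a a haD y hy ha.2 fun h => h.1.false)
  · exact off_a x hx y hy hxy ha

theorem sub_one_mul_exp_neg_lt {x : ℝ} (hx : 0 < x) (hne : x ≠ φ) :
    (x - 1) * exp (-x) < (2 - φ) * exp (-φ) * x := by
  have hφ : 0 < 2 - φ := sub_pos.2 goldenRatio_lt_two
  have hexp : x - φ + 1 < exp (x - φ) := add_one_lt_exp (sub_ne_zero.2 hne)
  -- `(2 - φ) x (x - φ + 1) - (x - 1) = (2 - φ) (x - φ)²`, because `φ² = φ + 1`.
  have hsq : x - 1 ≤ (2 - φ) * x * (x - φ + 1) := by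
    nlinarith [mul_nonneg hφ.le (sq_nonneg (x - φ)), goldenRatio_sq]
  calc (x - 1) * exp (-x) < (2 - φ) * x * exp (x - φ) * exp (-x) := by
        gcongr
        nlinarith [mul_pos hφ hx]
    _ = (2 - φ) * exp (-φ) * x := by
      rw [mul_assoc, ← exp_add]
      ring_nf

theorem hasDerivAt_mul_exp_neg_add_mul_sq (b x : ℝ) :
    HasDerivAt (fun x => x * exp (-x) + b * x ^ 2) ((1 - x) * exp (-x) + 2 * b * x) x :=
  (((hasDerivAt_id' x).mul (hasDerivAt_neg x).exp).add
    ((hasDerivAt_pow 2 x).const_mul b)).congr_deriv (by ring)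

theorem strictMonoOn_mul_exp_neg_add_mul_sq {b : ℝ} (hb : (2 - φ) * exp (-φ) ≤ 2 * b) :
    StrictMonoOn (fun x => x * exp (-x) + b * x ^ 2) (Ici 0) := by
  refine strictMonoOn_of_deriv_pos_of_ne (a := φ) (convex_Ici 0) (by fun_prop) fun x hx hne => ?_
  rw [interior_Ici] at hx
  rw [(hasDerivAt_mul_exp_neg_add_mul_sq b x).deriv]
  nlinarith [sub_one_mul_exp_neg_lt hx hne, mul_le_mul_of_nonneg_right hb hx.le]

theorem tendsto_mul_exp_neg_add_mul_sq_atTop {b : ℝ} (hb : 0 < b) :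
    Tendsto (fun x => x * exp (-x) + b * x ^ 2) atTop atTop := by
  refine tendsto_atTop_mono' _ ?_ ((tendsto_pow_atTop two_ne_zero).const_mul_atTop hb)
  filter_upwards [eventually_ge_atTop 0] with x hx
  have : 0 ≤ x * exp (-x) := by positivity
  linarith

/-- If `x₀ = (1 + √5)/2` and `2b ≥ (2 − x₀)e^{−x₀}`, then
`f(x) = x e^{−x} + b x²` is strictly increasing on `(0, ∞)`, maps `(0, ∞)` onto
`(0, ∞)`, and for every `c > 0` the equation `f(x) = c` has exactly one positive
solution. -/
theorem one_stationary_point (b : ℝ)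
    (hb : (2 - (1 + Real.sqrt 5) / 2) * Real.exp (-((1 + Real.sqrt 5) / 2)) ≤ 2 * b) :
    StrictMonoOn (fun x : ℝ => x * Real.exp (-x) + b * x ^ 2) (Set.Ioi 0) ∧
    (fun x : ℝ => x * Real.exp (-x) + b * x ^ 2) '' Set.Ioi 0 = Set.Ioi 0 ∧
    ∀ c > (0:ℝ), ∃! x : ℝ, 0 < x ∧ x * Real.exp (-x) + b * x ^ 2 = c := by
  replace hb : (2 - φ) * exp (-φ) ≤ 2 * b := hb
  have hb_pos : 0 < b := by
    have : 0 < (2 - φ) * exp (-φ) := mul_pos (sub_pos.2 goldenRatio_lt_two) (exp_pos _)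
    linarith
  have hmono := strictMonoOn_mul_exp_neg_add_mul_sq hb
  have himage := (Continuous.continuousOn (by fun_prop)).image_Ioi_of_strictMonoOn hmono
    (tendsto_mul_exp_neg_add_mul_sq_atTop hb_pos)
  simp only [neg_zero, exp_zero, mul_one, zero_pow two_ne_zero, mul_zero, add_zero] at himage
  refine ⟨hmono.mono Ioi_subset_Ici_self, himage, fun c hc => ?_⟩
  rw [gt_iff_lt, ← mem_Ioi, ← himage] at hc
  obtain ⟨x, hx, rfl⟩ := hc
  exact ⟨x, ⟨hx, rfl⟩, fun y ⟨hy, hxy⟩ => hmono.injOn (mem_Ici_of_Ioi hy) (mem_Ici_of_Ioi hx) hxy⟩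
end
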